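/- arXiv:math/0608103 — 8 statements merged into one kernel-verified Lean document; each statement's English description precedes it below -/
import Mathlib

section
/- Let a, b, c and a′, b′, c′ be integers with 0 ≤ a, 0 ≤ b, a ∣ b, b ∣ c and 0 ≤ a′, 0 ≤ b′, a′ ∣ b′, b′ ∣ c′. If there exists a ℤ-linear automorphism f of ℤ⁶ with determinant 1 such that the induced automorphism ⋀²f of ⋀²(ℤ⁶) sends a·(e₁∧e₂) + b·(e₃∧e₄) + c·(e₅∧e₆) to a′·(e₁∧e₂) + b′·(e₃∧e₄) + c′·(e₅∧e₆), then a = a′, b = b′ and c = c′. -/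
/-!
The three invariants of `ω = a·e₀∧e₁ + b·e₂∧e₃ + c·e₄∧e₅` under `SL₆(ℤ)` are the content of `ω`,
the content of `ω∧ω = 2(ab·e₀₁₂₃ + ac·e₀₁₄₅ + bc·e₂₃₄₅)` and `ω∧ω∧ω = 6abc·e₀₁₂₃₄₅`.
Since `a ∣ b ∣ c`, these are `a`, `2ab` and `6abc`. Contents can only grow under a linear map, so
applying the argument to `f` and `f⁻¹` gives `a = a'` and `ab = a'b'`, while
`⋀⁶f = det f = 1` gives `abc = a'b'c'`. The divisibility conditions then determine `b` and `c`.
-/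

open ExteriorAlgebra

/-- The image in the exterior algebra of the `i`-th standard basis vector of `ℤⁿ`. -/
noncomputable def e {n : ℕ} (i : Fin n) : ExteriorAlgebra ℤ (Fin n → ℤ) :=
  ι ℤ (Pi.single i 1)

section SquareZero

variable {R A : Type*} [CommRing R] [Ring A] [Algebra R A] {x y z : A}

theorem smul_add_smul_add_smul_sq (hxy : Commute x y) (hxz : Commute x z) (hyz : Commute y z)
    (hx : x * x = 0) (hy : y * y = 0) (hz : z * z = 0) (a b c : R) :
    (a • x + b • y + c • z) ^ 2 =
      (2 * (a * b)) • (x * y) + (2 * (a * c)) • (x * z) + (2 * (b * c)) • (y * z) := by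
  simp only [sq, add_mul, mul_add, smul_mul_smul_comm, hx, hy, hz, ← hxy.eq, ← hxz.eq, ← hyz.eq,
    smul_zero]
  module

theorem smul_add_smul_add_smul_pow_three (hxy : Commute x y) (hxz : Commute x z)
    (hyz : Commute y z) (hx : x * x = 0) (hy : y * y = 0) (hz : z * z = 0) (a b c : R) :
    (a • x + b • y + c • z) ^ 3 = (6 * (a * b * c)) • (x * y * z) := by
  have hx' : ∀ w, x * (x * w) = 0 := fun w => by rw [← mul_assoc, hx, zero_mul]
  have hy' : ∀ w, y * (y * w) = 0 := fun w => by rw [← mul_assoc, hy, zero_mul]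
  rw [pow_succ, smul_add_smul_add_smul_sq hxy hxz hyz hx hy hz]
  simp only [add_mul, mul_add, smul_mul_smul_comm, mul_assoc, hx', hy', ← hxy.eq, ← hxz.eq,
    ← hyz.eq, ← hxy.left_comm, hy, hz, smul_zero, mul_zero]
  module

end SquareZero

namespace ExteriorAlgebra

variable {R M : Type*} [CommRing R] [AddCommGroup M] [Module R M]

theorem ι_mul_ι_commute_ι (p q r : M) : Commute (ι R p * ι R q) (ι R r) := by
  have swap : ∀ u v : M, ι R u * ι R v = -(ι R v * ι R u) := fun u v =>
    eq_neg_of_add_eq_zero_left (ι_add_mul_swap u v)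
  rw [Commute, SemiconjBy, mul_assoc, swap q r, mul_neg, ← mul_assoc, swap p r, neg_mul, neg_neg,
    mul_assoc]

theorem ι_mul_ι_commute (p q r s : M) : Commute (ι R p * ι R q) (ι R r * ι R s) :=
  (ι_mul_ι_commute_ι p q r).mul_right (ι_mul_ι_commute_ι p q s)

theorem ι_mul_ι_mul_self (p q : M) : ι R p * ι R q * (ι R p * ι R q) = 0 := by
  rw [← mul_assoc, (ι_mul_ι_commute_ι p q p).eq, ← mul_assoc, ι_sq_zero, zero_mul, zero_mul]

variable {n k : ℕ}

/-- The coordinate along `e (s 0) ∧ ⋯ ∧ e (s (k-1))`: the minor in the columns `s` on `k`-vectors,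
zero in other degrees. -/
noncomputable def minorCoeff (s : Fin k → Fin n) : ExteriorAlgebra R (Fin n → R) →ₗ[R] R :=
  liftAlternating
    (Pi.single k (Matrix.detRowAlternating.compLinearMap (LinearMap.funLeft R R s)))

theorem minorCoeff_ιMulti (s : Fin k → Fin n) (v : Fin k → Fin n → R) :
    minorCoeff s (ιMulti R k v) = (Matrix.of fun i j => v i (s j)).det := by
  rw [minorCoeff, liftAlternating_apply_ιMulti, Pi.single_eq_same]
  rfl

theorem minorCoeff_ιMulti_single_self {s : Fin k → Fin n} (hs : Function.Injective s) :
    minorCoeff s (ιMulti R k fun i => Pi.single (s i) 1) = 1 := by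
  rw [minorCoeff_ιMulti]
  convert Matrix.det_one (n := Fin k) (R := R)
  ext i j
  simp [Matrix.one_apply, Pi.single_apply, hs.eq_iff, eq_comm]

theorem minorCoeff_ιMulti_single_of_forall_ne {s t : Fin k → Fin n} (i : Fin k)
    (hi : ∀ j, s j ≠ t i) : minorCoeff s (ιMulti R k fun i => Pi.single (t i) 1) = 0 := by
  rw [minorCoeff_ιMulti]
  exact Matrix.det_eq_zero_of_row_eq_zero i fun j => Pi.single_eq_of_ne (hi j) _

theorem minorCoeff_id_map_ιMulti_single (f : (Fin n → R) →ₗ[R] Fin n → R) :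
    minorCoeff id (map f (ιMulti R n fun i => Pi.single i 1)) = LinearMap.det f := by
  rw [map_apply_ιMulti, minorCoeff_ιMulti, ← LinearMap.det_toMatrix', ← Matrix.det_transpose]
  congr 1

end ExteriorAlgebra

theorem Int.dvd_linearMap_apply {M : Type*} [AddCommGroup M] (φ : M →ₗ[ℤ] ℤ) {d y z : ℤ}
    (hy : d ∣ y) (hz : d ∣ z) (u v w : M) : d ∣ φ (d • u + y • v + z • w) := by
  obtain ⟨y, rfl⟩ := hy
  obtain ⟨z, rfl⟩ := hz
  exact ⟨φ (u + y • v + z • w), by simp only [mul_smul, ← smul_add, map_smul, smul_eq_mul]⟩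

theorem Int.eq_and_eq_of_mul_eq_of_dvd {a b c b' c' : ℤ} (hab : a ∣ b) (hbc : b ∣ c)
    (hab' : a ∣ b') (hbc' : b' ∣ c') (h₂ : a * b = a * b') (h₃ : a * b * c = a * b' * c') :
    b = b' ∧ c = c' := by
  rcases eq_or_ne a 0 with rfl | ha
  · obtain rfl := zero_dvd_iff.mp hab
    obtain rfl := zero_dvd_iff.mp hab'
    exact ⟨rfl, (zero_dvd_iff.mp hbc).trans (zero_dvd_iff.mp hbc').symm⟩
  obtain rfl := mul_left_cancel₀ ha h₂
  rcases eq_or_ne b 0 with rfl | hb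
  · exact ⟨rfl, (zero_dvd_iff.mp hbc).trans (zero_dvd_iff.mp hbc').symm⟩
  exact ⟨rfl, mul_left_cancel₀ (mul_ne_zero ha hb) h₃⟩

theorem e_mul_e {n : ℕ} (i j : Fin n) :
    e i * e j = ιMulti ℤ 2 fun k => Pi.single (![i, j] k) 1 := by
  simp [ιMulti_apply, e, Matrix.vecTail]

theorem e_mul_e_mul_e_mul_e {n : ℕ} (i j k l : Fin n) :
    e i * e j * (e k * e l) = ιMulti ℤ 4 fun m => Pi.single (![i, j, k, l] m) 1 := by
  simp [ιMulti_apply, e, mul_assoc, Matrix.vecTail]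

theorem e_mul_e_commute {n : ℕ} (i j k l : Fin n) : Commute (e i * e j) (e k * e l) :=
  ι_mul_ι_commute _ _ _ _

theorem e_mul_e_mul_self {n : ℕ} (i j : Fin n) : e i * e j * (e i * e j) = 0 :=
  ι_mul_ι_mul_self _ _

noncomputable def normalForm (a b c : ℤ) : ExteriorAlgebra ℤ (Fin 6 → ℤ) :=
  a • (e 0 * e 1) + b • (e 2 * e 3) + c • (e 4 * e 5)

theorem normalForm_sq (a b c : ℤ) :
    normalForm a b c ^ 2 = (2 * (a * b)) • (e 0 * e 1 * (e 2 * e 3)) +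
      (2 * (a * c)) • (e 0 * e 1 * (e 4 * e 5)) + (2 * (b * c)) • (e 2 * e 3 * (e 4 * e 5)) :=
  smul_add_smul_add_smul_sq (e_mul_e_commute _ _ _ _) (e_mul_e_commute _ _ _ _)
    (e_mul_e_commute _ _ _ _) (e_mul_e_mul_self _ _) (e_mul_e_mul_self _ _)
    (e_mul_e_mul_self _ _) a b c

theorem normalForm_pow_three (a b c : ℤ) :
    normalForm a b c ^ 3 = (6 * (a * b * c)) • ιMulti ℤ 6 fun i => Pi.single i 1 := by
  rw [normalForm, smul_add_smul_add_smul_pow_three (e_mul_e_commute _ _ _ _)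
    (e_mul_e_commute _ _ _ _) (e_mul_e_commute _ _ _ _) (e_mul_e_mul_self _ _)
    (e_mul_e_mul_self _ _) (e_mul_e_mul_self _ _)]
  simp [ιMulti_apply, e, mul_assoc, Matrix.vecTail]

theorem minorCoeff_normalForm (a b c : ℤ) : minorCoeff ![0, 1] (normalForm a b c) = a := by
  have hX : minorCoeff ![(0 : Fin 6), 1] (e 0 * e 1) = 1 := by
    rw [e_mul_e]; exact minorCoeff_ιMulti_single_self (by decide)
  have hY : minorCoeff ![(0 : Fin 6), 1] (e 2 * e 3) = 0 := by
    rw [e_mul_e]; exact minorCoeff_ιMulti_single_of_forall_ne 0 (by decide)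
  have hZ : minorCoeff ![(0 : Fin 6), 1] (e 4 * e 5) = 0 := by
    rw [e_mul_e]; exact minorCoeff_ιMulti_single_of_forall_ne 0 (by decide)
  simp only [normalForm, map_add, map_smul, hX, hY, hZ, smul_eq_mul]
  ring

theorem minorCoeff_normalForm_sq (a b c : ℤ) :
    minorCoeff ![0, 1, 2, 3] (normalForm a b c ^ 2) = 2 * (a * b) := by
  have hXY : minorCoeff ![(0 : Fin 6), 1, 2, 3] (e 0 * e 1 * (e 2 * e 3)) = 1 := by
    rw [e_mul_e_mul_e_mul_e]; exact minorCoeff_ιMulti_single_self (by decide)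
  have hXZ : minorCoeff ![(0 : Fin 6), 1, 2, 3] (e 0 * e 1 * (e 4 * e 5)) = 0 := by
    rw [e_mul_e_mul_e_mul_e]; exact minorCoeff_ιMulti_single_of_forall_ne 2 (by decide)
  have hYZ : minorCoeff ![(0 : Fin 6), 1, 2, 3] (e 2 * e 3 * (e 4 * e 5)) = 0 := by
    rw [e_mul_e_mul_e_mul_e]; exact minorCoeff_ιMulti_single_of_forall_ne 2 (by decide)
  simp only [normalForm_sq, map_add, map_smul, hXY, hXZ, hYZ, smul_eq_mul]
  ring

section MapNormalForm

variable {a b c a' b' c' : ℤ} (g : (Fin 6 → ℤ) →ₗ[ℤ] Fin 6 → ℤ)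

theorem dvd_of_map_normalForm (hab : a ∣ b) (hbc : b ∣ c)
    (h : map g (normalForm a b c) = normalForm a' b' c') : a ∣ a' ∧ a * b ∣ a' * b' := by
  have hac : a ∣ c := hab.trans hbc
  constructor
  · rw [← minorCoeff_normalForm a' b' c', ← h, normalForm]
    simpa only [LinearMap.comp_apply, AlgHom.toLinearMap_apply] using
      Int.dvd_linearMap_apply ((minorCoeff ![0, 1]).comp (map g).toLinearMap) hab hac
        (e 0 * e 1) (e 2 * e 3) (e 4 * e 5)
  · have h₂ : 2 * (a * b) ∣ 2 * (a' * b') := by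
      rw [← minorCoeff_normalForm_sq a' b' c', ← h, ← map_pow, normalForm_sq]
      have hab_bc : a * b ∣ b * c := by
        rw [mul_comm b c]
        exact mul_dvd_mul hac dvd_rfl
      simpa only [LinearMap.comp_apply, AlgHom.toLinearMap_apply] using
        Int.dvd_linearMap_apply ((minorCoeff ![0, 1, 2, 3]).comp (map g).toLinearMap)
          (mul_dvd_mul_left 2 (mul_dvd_mul_left a hbc)) (mul_dvd_mul_left 2 hab_bc)
          (e 0 * e 1 * (e 2 * e 3)) (e 0 * e 1 * (e 4 * e 5)) (e 2 * e 3 * (e 4 * e 5))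
    exact (mul_dvd_mul_iff_left two_ne_zero).mp h₂

theorem mul_mul_eq_det_mul_of_map_normalForm
    (h : map g (normalForm a b c) = normalForm a' b' c') :
    a' * b' * c' = LinearMap.det g * (a * b * c) := by
  have htop : minorCoeff id (ιMulti ℤ 6 fun i : Fin 6 => Pi.single i 1) = 1 :=
    minorCoeff_ιMulti_single_self Function.injective_id
  apply mul_left_cancel₀ (by norm_num : (6 : ℤ) ≠ 0)
  calc 6 * (a' * b' * c') = minorCoeff id (normalForm a' b' c' ^ 3) := by
        rw [normalForm_pow_three, map_smul, htop, smul_eq_mul, mul_one]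
    _ = minorCoeff id (map g (normalForm a b c ^ 3)) := by rw [← h, map_pow (map g)]
    _ = 6 * (LinearMap.det g * (a * b * c)) := by
        rw [normalForm_pow_three, map_smul, map_smul, minorCoeff_id_map_ιMulti_single,
          smul_eq_mul]
        ring

end MapNormalForm

/-- Uniqueness half of the normal form theorem for `⋀²(ℤ⁶)`: the integers
`a, b, c` with `0 ≤ a`, `0 ≤ b`, `a ∣ b`, `b ∣ c` in the normal form
`a·(e₁∧e₂) + b·(e₃∧e₄) + c·(e₅∧e₆)` are uniquely determined, i.e. two normal
forms related by a determinant-one automorphism of `ℤ⁶` coincide. -/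
theorem normal_form_unique (a b c a' b' c' : ℤ)
    (ha : 0 ≤ a) (hb : 0 ≤ b) (hab : a ∣ b) (hbc : b ∣ c)
    (ha' : 0 ≤ a') (hb' : 0 ≤ b') (hab' : a' ∣ b') (hbc' : b' ∣ c')
    (f : (Fin 6 → ℤ) ≃ₗ[ℤ] (Fin 6 → ℤ))
    (hdet : LinearMap.det f.toLinearMap = 1)
    (hf : ExteriorAlgebra.map f.toLinearMap
        (a • (e 0 * e 1) + b • (e 2 * e 3) + c • (e 4 * e 5)) =
        a' • (e 0 * e 1) + b' • (e 2 * e 3) + c' • (e 4 * e 5)) :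
    a = a' ∧ b = b' ∧ c = c' := by
  change map f.toLinearMap (normalForm a b c) = normalForm a' b' c' at hf
  have hf' : map f.symm.toLinearMap (normalForm a' b' c') = normalForm a b c := by
    rw [← hf]
    exact leftInverse_map_iff.mpr f.symm_apply_apply _
  obtain ⟨ha_dvd, hab_dvd⟩ := dvd_of_map_normalForm f.toLinearMap hab hbc hf
  obtain ⟨ha_dvd', hab_dvd'⟩ := dvd_of_map_normalForm f.symm.toLinearMap hab' hbc' hf'
  obtain rfl : a = a' := Int.dvd_antisymm ha ha' ha_dvd ha_dvd'
  have h₂ : a * b = a * b' :=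
    Int.dvd_antisymm (mul_nonneg ha hb) (mul_nonneg ha hb') hab_dvd hab_dvd'
  have h₃ : a * b' * c' = a * b * c := by
    simpa only [hdet, one_mul] using mul_mul_eq_det_mul_of_map_normalForm f.toLinearMap hf
  exact ⟨rfl, Int.eq_and_eq_of_mul_eq_of_dvd hab hbc hab' hbc' h₂ h₃.symm⟩
end

section
/- Let a, b, c be integers with a and b coprime. Then there exists a ℤ-linear automorphism f of ℤ⁴ with determinant 1 such that the induced automorphism ⋀²f of ⋀²(ℤ⁴) sends c·(a·(e₁∧e₂) + b·(e₃∧e₄)) to c·(e₁∧e₂ + a·b·(e₃∧e₄)). -/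
/-!
Choose `p, q` with `p a + q b = 1` and send the basis vectors `x₀, x₁, x₂, x₃` to
`x₀ - bq x₂, p x₁ - b x₃, x₀ + ap x₂, q x₁ + a x₃`. This map preserves the planes `⟨x₀, x₂⟩`
and `⟨x₁, x₃⟩`, acting on each by a `2 × 2` matrix of determinant `p a + q b = 1`.
Expanding `a (f x₀ ∧ f x₁) + b (f x₂ ∧ f x₃)` bilinearly, the mixed terms `x₀ ∧ x₃` and
`x₂ ∧ x₁` cancel, and the remaining coefficients are `p a + q b` and `ab (p a + q b)`.
-/

open ExteriorAlgebra

open Matrix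

theorem ExteriorAlgebra.ι_mul_ι_twist_combination {R M : Type*} [CommRing R] [AddCommGroup M]
    [Module R M] (a b p q : R) (x₀ x₁ x₂ x₃ : M) :
    a • (ι R (x₀ - (b * q) • x₂) * ι R (p • x₁ - b • x₃)) +
        b • (ι R (x₀ + (a * p) • x₂) * ι R (q • x₁ + a • x₃)) =
      (p * a + q * b) • (ι R x₀ * ι R x₁ + (a * b) • (ι R x₂ * ι R x₃)) := by
  simp only [map_sub, map_add, map_smul, sub_mul, add_mul, mul_sub, mul_add, smul_mul_assoc,
    mul_smul_comm]
  match_scalars <;> ring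

theorem Matrix.SpecialLinearGroup.det_toLin' {n R : Type*} [Fintype n] [DecidableEq n]
    [CommRing R] (A : SpecialLinearGroup n R) :
    LinearMap.det (SpecialLinearGroup.toLin' A : (n → R) →ₗ[R] n → R) = 1 := by
  rw [SpecialLinearGroup.toLin'_to_linearMap, LinearMap.det_toLin', A.det_coe]

section Twist

variable {R : Type*} [CommRing R]

def twistMatrix (a b p q : R) : Matrix (Fin 4) (Fin 4) R :=
  !![1, 0, 1, 0; 0, p, 0, q; -(b * q), 0, a * p, 0; 0, -b, 0, a]

theorem det_twistMatrix (a b p q : R) :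
    (twistMatrix a b p q).det = (p * a + q * b) ^ 2 := by
  rw [twistMatrix, det_succ_row_zero]
  simp [Fin.sum_univ_four, det_fin_three, Fin.succAbove]
  ring

theorem twistMatrix_mulVec_single_one (a b p q : R) (j : Fin 4) :
    twistMatrix a b p q *ᵥ Pi.single j 1 =
      ![Pi.single 0 1 - (b * q) • Pi.single 2 1, p • Pi.single 1 1 - b • Pi.single 3 1,
        Pi.single 0 1 + (a * p) • Pi.single 2 1, q • Pi.single 1 1 + a • Pi.single 3 1] j := by
  ext i
  fin_cases j <;> fin_cases i <;> simp [twistMatrix]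

def twistSL {a b p q : R} (hpq : p * a + q * b = 1) : SpecialLinearGroup (Fin 4) R :=
  ⟨twistMatrix a b p q, by rw [det_twistMatrix, hpq, one_pow]⟩

theorem coe_twistSL {a b p q : R} (hpq : p * a + q * b = 1) :
    (twistSL hpq : Matrix (Fin 4) (Fin 4) R) = twistMatrix a b p q :=
  rfl

end Twist

/-- The key change-of-basis lemma: if `a` and `b` are coprime, then a
determinant-one automorphism of `ℤ⁴` carries `c·(a·(e₁∧e₂) + b·(e₃∧e₄))` to
`c·(e₁∧e₂ + ab·(e₃∧e₄))`. -/
theorem change_of_basis (a b c : ℤ) (h : IsCoprime a b) :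
    ∃ f : (Fin 4 → ℤ) ≃ₗ[ℤ] (Fin 4 → ℤ),
      LinearMap.det f.toLinearMap = 1 ∧
      ExteriorAlgebra.map f.toLinearMap (c • (a • (e 0 * e 1) + b • (e 2 * e 3))) =
        c • (e 0 * e 1 + (a * b) • (e 2 * e 3)) := by
  obtain ⟨p, q, hpq⟩ := h
  refine ⟨SpecialLinearGroup.toLin' (twistSL hpq), SpecialLinearGroup.det_toLin' _, ?_⟩
  rw [map_smul, map_add, map_smul, map_smul, map_mul, map_mul]
  simp only [e, map_apply_ι, LinearEquiv.coe_coe, SpecialLinearGroup.toLin'_apply, coe_twistSL,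
    toLin'_apply, twistMatrix_mulVec_single_one, cons_val]
  rw [ι_mul_ι_twist_combination, hpq, one_smul]
end

section
/- There exists a subgroup W of ⋀²(ℤ⁶) that is free abelian of rank 7 and satisfies: for all integers a, b, c and all x, y ∈ W, x∧y∧(a·(e₁∧e₂) + b·(e₃∧e₄) + c·(e₅∧e₆)) = 0 in ⋀⁶(ℤ⁶). -/
open ExteriorAlgebra

/-! ### Auxiliary definitions -/

/-- Abbreviation for the standard basis vectors of `ℤ⁶` inside the exterior algebra. -/
noncomputable def es (i : Fin 6) : ExteriorAlgebra ℤ (Fin 6 → ℤ) := ι ℤ (Pi.single i 1)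

/-- Index pairs of the seven generators of `W`. -/
def P : Fin 7 → Fin 6 × Fin 6 := ![(0,1),(0,2),(0,3),(0,4),(0,5),(2,4),(2,5)]

/-- Index pairs of the three summands of `ω`. -/
def Q : Fin 3 → Fin 6 × Fin 6 := ![(0,1),(2,3),(4,5)]

/-- The seven generators of `W`. -/
noncomputable def v (k : Fin 7) : ExteriorAlgebra ℤ (Fin 6 → ℤ) := es (P k).1 * es (P k).2

/-- The three summands of `ω`. -/
noncomputable def w (m : Fin 3) : ExteriorAlgebra ℤ (Fin 6 → ℤ) := es (Q m).1 * es (Q m).2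

/-- All six indices occurring in `v k * v l * w m`. -/
def F (k : Fin 7) (l : Fin 7) (m : Fin 3) : Fin 6 → Fin 6 :=
  ![(P k).1, (P k).2, (P l).1, (P l).2, (Q m).1, (Q m).2]

lemma key (f : Fin 6 → Fin 6) (h : ∃ i j : Fin 6, i ≠ j ∧ f i = f j) :
    (es (f 0) * es (f 1)) * (es (f 2) * es (f 3)) * (es (f 4) * es (f 5)) = 0 := by
  obtain ⟨i, j, hij, hfe⟩ := h
  have : (es (f 0) * es (f 1)) * (es (f 2) * es (f 3)) * (es (f 4) * es (f 5)) =
      ιMulti ℤ 6 (fun t => (Pi.single (f t) 1 : Fin 6 → ℤ)) := by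
    rw [ιMulti_apply]
    simp [es, List.ofFn_succ, mul_assoc]
  rw [this]
  exact AlternatingMap.map_eq_zero_of_eq _ _ (by rw [hfe]) hij

lemma allzero : ∀ (k l : Fin 7) (m : Fin 3), v k * v l * w m = 0 := by
  intro k l m
  exact key (F k l m) (by revert k l m; decide)

/-- The alternating form extracting the `(q.1, q.2)`-coordinate of a 2-vector. -/
noncomputable def A (q : Fin 6 × Fin 6) : (Fin 6 → ℤ) [⋀^Fin 2]→ₗ[ℤ] ℤ :=
  (Matrix.detRowAlternating (R := ℤ) (n := Fin 2)).compLinearMap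
    (LinearMap.funLeft ℤ ℤ ![q.1, q.2])

noncomputable def fam (q : Fin 6 × Fin 6) :
    ∀ i : ℕ, (Fin 6 → ℤ) [⋀^Fin i]→ₗ[ℤ] ℤ :=
  fun i => if h : i = 2 then h ▸ A q else 0

noncomputable def φ (q : Fin 6 × Fin 6) :
    ExteriorAlgebra ℤ (Fin 6 → ℤ) →ₗ[ℤ] ℤ := liftAlternating (fam q)

lemma φ_apply (q : Fin 6 × Fin 6) (u x : Fin 6 → ℤ) :
    φ q (ι ℤ u * ι ℤ x) = u q.1 * x q.2 - u q.2 * x q.1 := by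
  rw [φ, liftAlternating_ι_mul, liftAlternating_ι]
  show (fam q 2).curryLeft u ![x] = _
  rw [show fam q 2 = A q from dif_pos rfl]
  simp only [A, AlternatingMap.curryLeft_apply_apply, AlternatingMap.compLinearMap_apply]
  have hdet : ∀ g : Fin 2 → Fin 2 → ℤ,
      Matrix.detRowAlternating g = Matrix.det (Matrix.of g) := fun _ => rfl
  rw [hdet, Matrix.det_fin_two]
  simp [LinearMap.funLeft_apply]

lemma φ_v (k l : Fin 7) : φ (P k) (v l) = if k = l then 1 else 0 := by
  rw [v, es, es, φ_apply]
  fin_cases k <;> fin_cases l <;> decide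

lemma indep : LinearIndependent ℤ v := by
  rw [Fintype.linearIndependent_iff]
  intro g hg k
  have := congrArg (φ (P k)) hg
  simp only [map_sum, map_smul, map_zero, φ_v, smul_eq_mul, mul_ite, mul_one, mul_zero] at this
  rwa [Finset.sum_ite_eq Finset.univ k g, if_pos (Finset.mem_univ k)] at this

/-- There is a free abelian subgroup `W` of `⋀²(ℤ⁶)` of rank 7 which is totally
isotropic for every `ω = a·(e₁∧e₂) + b·(e₃∧e₄) + c·(e₅∧e₆)` simultaneously. -/
theorem rank_seven_isotropic :
    ∃ W : Submodule ℤ (ExteriorAlgebra ℤ (Fin 6 → ℤ)),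
      W ≤ ⋀[ℤ]^2 (Fin 6 → ℤ) ∧ Module.Free ℤ W ∧ Module.finrank ℤ W = 7 ∧
      ∀ (a b c : ℤ), ∀ x ∈ W, ∀ y ∈ W,
        x * y * (a • (e 0 * e 1) + b • (e 2 * e 3) + c • (e 4 * e 5)) = 0 := by
  refine ⟨Submodule.span ℤ (Set.range v), ?_, ?_, ?_, ?_⟩
  · rw [Submodule.span_le]
    rintro _ ⟨k, rfl⟩
    show v k ∈ (LinearMap.range (ι ℤ (M := Fin 6 → ℤ))) ^ 2
    rw [pow_two]
    exact Submodule.mul_mem_mul ⟨_, rfl⟩ ⟨_, rfl⟩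
  · exact Module.Free.of_basis (Module.Basis.span indep)
  · rw [Module.finrank_eq_card_basis (Module.Basis.span indep), Fintype.card_fin]
  · intro a b c x hx y hy
    have hmain : ∀ m : Fin 3, x * y * w m = 0 := by
      intro m
      induction hx, hy using Submodule.span_induction₂ with
      | mem_mem u z hu hz =>
        obtain ⟨k, rfl⟩ := hu; obtain ⟨l, rfl⟩ := hz; exact allzero k l m
      | zero_left z hz => simp
      | zero_right u hu => simp
      | add_left u₁ u₂ z h1 h2 h3 h4 h5 => rw [add_mul, add_mul, h4, h5, add_zero]
      | add_right u z₁ z₂ h1 h2 h3 h4 h5 => rw [mul_add, add_mul, h4, h5, add_zero]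
      | smul_left r u z h1 h2 h3 => rw [smul_mul_assoc, smul_mul_assoc, h3, smul_zero]
      | smul_right r u z h1 h2 h3 => rw [mul_smul_comm, smul_mul_assoc, h3, smul_zero]
    have h0 : e 0 * e 1 = w 0 := rfl
    have h1 : e 2 * e 3 = w 1 := rfl
    have h2 : e 4 * e 5 = w 2 := rfl
    rw [h0, h1, h2, mul_add, mul_add, mul_smul_comm, mul_smul_comm, mul_smul_comm,
      hmain 0, hmain 1, hmain 2]
    simp
end

section
/- Let W be the subgroup of ⋀²(ℤ⁶) spanned by the ten elements e₁∧e₂, e₁∧e₃, e₁∧e₄, e₁∧e₅, e₁∧e₆, e₂∧e₃, e₂∧e₄, e₃∧e₄, e₃∧e₅, e₃∧e₆. Then for all integers a, b, c and all x, y ∈ W, the element x∧y∧(a·(e₁∧e₂) + b·(e₃∧e₄) + c·(e₅∧e₆)) of ⋀⁶(ℤ⁶) is an integer multiple of c·(e₁∧e₂∧e₃∧e₄∧e₅∧e₆). In particular, for ω = a·(e₁∧e₂) + b·(e₃∧e₄) the subgroup W is totally isotropic for ω. -/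
open ExteriorAlgebra

lemma e_sq {n : ℕ} (i : Fin n) : e i * e i = 0 := ι_sq_zero _

lemma e_sq' {n : ℕ} (i : Fin n) (x : ExteriorAlgebra ℤ (Fin n → ℤ)) :
    e i * (e i * x) = 0 := by
  rw [← mul_assoc, e_sq, zero_mul]

lemma e_swap {n : ℕ} {i j : Fin n} (h : j < i) : e i * e j = -(e j * e i) := by
  have := ι_add_mul_swap (R := ℤ) (M := Fin n → ℤ) (Pi.single i 1) (Pi.single j 1)
  exact eq_neg_of_add_eq_zero_left this

lemma e_swap' {n : ℕ} {i j : Fin n} (h : j < i) (x : ExteriorAlgebra ℤ (Fin n → ℤ)) :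
    e i * (e j * x) = -(e j * (e i * x)) := by
  rw [← mul_assoc, e_swap h, neg_mul, mul_assoc]

set_option maxHeartbeats 1600000 in
lemma key_s5 : ∀ x ∈ Submodule.span ℤ ({e 0 * e 1, e 0 * e 2, e 0 * e 3, e 0 * e 4, e 0 * e 5,
        e 1 * e 2, e 1 * e 3, e 2 * e 3, e 2 * e 4, e 2 * e 5} :
        Set (ExteriorAlgebra ℤ (Fin 6 → ℤ))),
    ∀ y ∈ Submodule.span ℤ ({e 0 * e 1, e 0 * e 2, e 0 * e 3, e 0 * e 4, e 0 * e 5,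
        e 1 * e 2, e 1 * e 3, e 2 * e 3, e 2 * e 4, e 2 * e 5} :
        Set (ExteriorAlgebra ℤ (Fin 6 → ℤ))),
    x * y * (e 0 * e 1) = 0 ∧ x * y * (e 2 * e 3) = 0 ∧
      ∃ m : ℤ, x * y * (e 4 * e 5) = m • (e 0 * e 1 * e 2 * e 3 * e 4 * e 5) := by
  intro x hx
  induction hx using Submodule.span_induction with
  | zero =>
    intro y _
    exact ⟨by rw [zero_mul, zero_mul], by rw [zero_mul, zero_mul],
      0, by rw [zero_mul, zero_mul, zero_smul]⟩
  | add u v _ _ hu hv =>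
    intro y hy
    obtain ⟨h1, h2, m1, h3⟩ := hu y hy
    obtain ⟨h1', h2', m2, h3'⟩ := hv y hy
    exact ⟨by rw [add_mul, add_mul, h1, h1', add_zero],
      by rw [add_mul, add_mul, h2, h2', add_zero],
      m1 + m2, by rw [add_mul, add_mul, h3, h3', add_smul]⟩
  | smul a u _ hu =>
    intro y hy
    obtain ⟨h1, h2, m1, h3⟩ := hu y hy
    exact ⟨by rw [smul_mul_assoc, smul_mul_assoc, h1, smul_zero],
      by rw [smul_mul_assoc, smul_mul_assoc, h2, smul_zero],
      a * m1, by rw [smul_mul_assoc, smul_mul_assoc, h3, smul_smul]⟩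
  | mem s hs =>
    intro y hy
    induction hy using Submodule.span_induction with
    | zero =>
      exact ⟨by rw [mul_zero, zero_mul], by rw [mul_zero, zero_mul],
        0, by rw [mul_zero, zero_mul, zero_smul]⟩
    | add u v _ _ hu hv =>
      obtain ⟨h1, h2, m1, h3⟩ := hu
      obtain ⟨h1', h2', m2, h3'⟩ := hv
      exact ⟨by rw [mul_add, add_mul, h1, h1', add_zero],
        by rw [mul_add, add_mul, h2, h2', add_zero],
        m1 + m2, by rw [mul_add, add_mul, h3, h3', add_smul]⟩
    | smul a u _ hu =>
      obtain ⟨h1, h2, m1, h3⟩ := hu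
      exact ⟨by rw [mul_smul_comm, smul_mul_assoc, h1, smul_zero],
        by rw [mul_smul_comm, smul_mul_assoc, h2, smul_zero],
        a * m1, by rw [mul_smul_comm, smul_mul_assoc, h3, smul_smul]⟩
    | mem t ht =>
      simp only [Set.mem_insert_iff, Set.mem_singleton_iff] at hs ht
      rcases hs with rfl|rfl|rfl|rfl|rfl|rfl|rfl|rfl|rfl|rfl <;>
        rcases ht with rfl|rfl|rfl|rfl|rfl|rfl|rfl|rfl|rfl|rfl <;>
        refine ⟨?_, ?_, ?_⟩ <;>
        first
        | (simp (disch := decide) only [mul_assoc, e_sq, e_sq', e_swap, e_swap',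
            neg_mul, mul_neg, neg_neg, mul_zero, zero_mul, neg_zero]
           done)
        | (refine ⟨0, ?_⟩
           simp (disch := decide) only [mul_assoc, e_sq, e_sq', e_swap, e_swap',
            neg_mul, mul_neg, neg_neg, mul_zero, zero_mul, neg_zero, zero_smul]
           done)
        | (refine ⟨1, ?_⟩
           simp (disch := decide) only [mul_assoc, e_sq, e_sq', e_swap, e_swap',
            neg_mul, mul_neg, neg_neg, mul_zero, zero_mul, neg_zero, one_smul]
           done)
        | (refine ⟨-1, ?_⟩
           simp (disch := decide) only [mul_assoc, e_sq, e_sq', e_swap, e_swap',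
            neg_mul, mul_neg, neg_neg, mul_zero, zero_mul, neg_zero, neg_smul, one_smul])

/-- The rank-10 subgroup `V₂` of `⋀²(ℤ⁶)` spanned by the ten indicated wedges:
pairing any two of its elements against `a·(e₁∧e₂) + b·(e₃∧e₄) + c·(e₅∧e₆)`
yields an integer multiple of `c` times the generator of `⋀⁶(ℤ⁶)`; in
particular `V₂` is totally isotropic for `ω = a·(e₁∧e₂) + b·(e₃∧e₄)`. -/
theorem rank_ten_subgroup :
    ∀ x ∈ Submodule.span ℤ ({e 0 * e 1, e 0 * e 2, e 0 * e 3, e 0 * e 4, e 0 * e 5,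
        e 1 * e 2, e 1 * e 3, e 2 * e 3, e 2 * e 4, e 2 * e 5} :
        Set (ExteriorAlgebra ℤ (Fin 6 → ℤ))),
    ∀ y ∈ Submodule.span ℤ ({e 0 * e 1, e 0 * e 2, e 0 * e 3, e 0 * e 4, e 0 * e 5,
        e 1 * e 2, e 1 * e 3, e 2 * e 3, e 2 * e 4, e 2 * e 5} :
        Set (ExteriorAlgebra ℤ (Fin 6 → ℤ))),
      (∀ a b c : ℤ, ∃ m : ℤ,
        x * y * (a • (e 0 * e 1) + b • (e 2 * e 3) + c • (e 4 * e 5)) =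
          (m * c) • (e 0 * e 1 * e 2 * e 3 * e 4 * e 5)) ∧
      (∀ a b : ℤ, x * y * (a • (e 0 * e 1) + b • (e 2 * e 3)) = 0) := by
  intro x hx y hy
  obtain ⟨h1, h2, m, h3⟩ := key_s5 x hx y hy
  constructor
  · intro a b c
    refine ⟨m, ?_⟩
    rw [mul_add, mul_add, mul_smul_comm, mul_smul_comm, mul_smul_comm, h1, h2, h3,
      smul_zero, smul_zero, zero_add, zero_add, smul_smul, mul_comm c m]
  · intro a b
    rw [mul_add, mul_smul_comm, mul_smul_comm, h1, h2, smul_zero, smul_zero, add_zero]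
end

section
/- Let W be the subgroup of ⋀²(ℤ⁵) spanned by the seven elements e₁∧e₂, e₁∧e₃, e₁∧e₄, e₁∧e₅, e₂∧e₃, e₂∧e₄, e₂∧e₅. Then for every integer k and all x, y ∈ W, x∧y∧(k·e₁) = 0 in ⋀⁵(ℤ⁵). -/
/-!
Every listed generator is `a ∧ b` with `a ∈ {e₁, e₂}`. Hence `x ∧ y ∧ e₁` expands into wedges of five
vectors, three of which (the first factors of the two generators and `e₁`) lie in `{e₁, e₂}`; two of
them coincide, so each wedge vanishes.
-/

open ExteriorAlgebra

namespace ExteriorAlgebra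

variable {R M : Type*} [CommRing R] [AddCommGroup M] [Module R M]

def spanWedgeLeftPair (u w : M) : Submodule R (ExteriorAlgebra R M) :=
  Submodule.span R {x | ∃ a ∈ ({u, w} : Set M), ∃ b, x = ι R a * ι R b}

theorem ι_mul_ι_mul_ι_mul_ι_mul_ι_eq_zero {u w a c : M} (ha : a ∈ ({u, w} : Set M))
    (hc : c ∈ ({u, w} : Set M)) (b d : M) :
    ι R a * ι R b * (ι R c * ι R d) * ι R u = 0 := by
  have hmulti : ι R a * ι R b * (ι R c * ι R d) * ι R u = ιMulti R 5 ![a, b, c, d, u] := by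
    simp [ιMulti_apply, mul_assoc]
  rw [hmulti]
  rcases ha with rfl | rfl
  · exact AlternatingMap.map_eq_zero_of_eq _ _ (i := 0) (j := 4) rfl (by decide)
  rcases hc with rfl | rfl
  · exact AlternatingMap.map_eq_zero_of_eq _ _ (i := 2) (j := 4) rfl (by decide)
  · exact AlternatingMap.map_eq_zero_of_eq _ _ (i := 0) (j := 2) rfl (by decide)

theorem mul_mul_ι_eq_zero_of_mem_spanWedgeLeftPair {u w : M} {x y : ExteriorAlgebra R M}
    (hx : x ∈ spanWedgeLeftPair u w) (hy : y ∈ spanWedgeLeftPair u w) :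
    x * y * ι R u = 0 := by
  have hle : spanWedgeLeftPair u w * spanWedgeLeftPair u w ≤
      LinearMap.ker (LinearMap.mulRight R (ι R u)) := by
    rw [spanWedgeLeftPair, Submodule.span_mul_span, Submodule.span_le]
    rintro _ ⟨_, ⟨a, ha, b, rfl⟩, _, ⟨c, hc, d, rfl⟩, rfl⟩
    exact ι_mul_ι_mul_ι_mul_ι_mul_ι_eq_zero ha hc b d
  exact hle (Submodule.mul_mem_mul hx hy)

end ExteriorAlgebra

/-- The rank-7 subgroup of `⋀²(ℤ⁵)` spanned by
`e₁∧e₂, e₁∧e₃, e₁∧e₄, e₁∧e₅, e₂∧e₃, e₂∧e₄, e₂∧e₅` is totally isotropic for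
every `ω = k·e₁ ∈ ⋀¹(ℤ⁵)`. -/
theorem rank_seven_isotropic_Z5 :
    ∀ x ∈ Submodule.span ℤ ({e 0 * e 1, e 0 * e 2, e 0 * e 3, e 0 * e 4,
        e 1 * e 2, e 1 * e 3, e 1 * e 4} : Set (ExteriorAlgebra ℤ (Fin 5 → ℤ))),
    ∀ y ∈ Submodule.span ℤ ({e 0 * e 1, e 0 * e 2, e 0 * e 3, e 0 * e 4,
        e 1 * e 2, e 1 * e 3, e 1 * e 4} : Set (ExteriorAlgebra ℤ (Fin 5 → ℤ))),
    ∀ k : ℤ, x * y * (k • e 0) = 0 := by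
  have hle : Submodule.span ℤ ({e 0 * e 1, e 0 * e 2, e 0 * e 3, e 0 * e 4,
      e 1 * e 2, e 1 * e 3, e 1 * e 4} : Set (ExteriorAlgebra ℤ (Fin 5 → ℤ))) ≤
      spanWedgeLeftPair (Pi.single 0 1) (Pi.single 1 1) := by
    refine Submodule.span_mono ?_
    rintro _ (rfl | rfl | rfl | rfl | rfl | rfl | rfl)
    all_goals exact ⟨_, by simp, _, rfl⟩
  intro x hx y hy k
  rw [mul_smul_comm, e, mul_mul_ι_eq_zero_of_mem_spanWedgeLeftPair (hle hx) (hle hy), smul_zero]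
end

section
/- Let H and G be finitely presented groups and let φ : H → G be a group homomorphism. Then there exist a finitely generated free group F and a group homomorphism Φ from the free product H ∗ F to G such that: the restriction of Φ to the factor H equals φ, Φ is surjective, and the kernel of Φ is the normal closure of a finite subset of H ∗ F. -/
/-!
Send the free factor onto `G` through a finite presentation `π : F → G` and `H` by `φ`. Modulo
the normal closure `N` of the relators of `G` and of one relator `h * w_h⁻¹` for each generator
`h` of `H` (with `π w_h = φ h`), every element of `H ∗ F` is congruent to an element of `F`;
an element of the kernel is therefore congruent to a relation of `G`, which already lies in `N`.
-/

/-- A group is finitely presented if it is isomorphic to the quotient of a finitely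
generated free group by the normal closure of finitely many relations. -/
def IsFinitelyPresented (G : Type) [Group G] : Prop :=
  ∃ (n : ℕ) (rels : Finset (FreeGroup (Fin n))),
    Nonempty (PresentedGroup (↑rels : Set (FreeGroup (Fin n))) ≃* G)

open Subgroup Monoid.Coprod

theorem IsFinitelyPresented.group_isFinitelyPresented {G : Type} [Group G]
    (h : IsFinitelyPresented G) : Group.IsFinitelyPresented G := by
  obtain ⟨n, rels, ⟨e⟩⟩ := h
  exact Group.IsFinitelyPresented.equiv e

theorem Group.IsFinitelyPresented.fg {G : Type*} [Group G] (h : Group.IsFinitelyPresented G) :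
    Group.FG G := by
  obtain ⟨n, π, hπ, -⟩ := h
  exact Group.fg_of_surjective hπ

namespace Monoid.Coprod

variable {H F G : Type*} [Group H] [Group F] [Group G]

theorem closure_image_inl_union_range_inr {T : Set H} (hT : closure T = ⊤) :
    closure (inl '' T ∪ Set.range (inr : F →* H ∗ F)) = ⊤ := by
  rw [eq_top_iff, ← range_inl_sup_range_inr, sup_le_iff]
  constructor
  · rw [MonoidHom.range_eq_map, ← hT, MonoidHom.map_closure]
    exact closure_mono Set.subset_union_left
  · exact fun x hx => subset_closure (Or.inr hx)

theorem lift_surjective_of_surjective_right (φ : H →* G) {π : F →* G}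
    (hπ : Function.Surjective π) : Function.Surjective (lift φ π) := fun g => by
  obtain ⟨f, rfl⟩ := hπ g
  exact ⟨inr f, lift_apply_inr φ π f⟩

theorem ker_lift_eq_normalClosure {φ : H →* G} {π : F →* G} {R : Set F}
    (hR : normalClosure R = π.ker) {T : Set H} (hT : closure T = ⊤) {w : H → F}
    (hw : ∀ t ∈ T, π (w t) = φ t) :
    (lift φ π).ker = normalClosure (inr '' R ∪ (fun t => inl t * (inr (w t))⁻¹) '' T) := by
  set N := normalClosure (inr '' R ∪ (fun t => inl t * (inr (w t))⁻¹) '' T)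
  have hN : N ≤ (lift φ π).ker := by
    refine normalClosure_le_normal ?_
    rintro _ (⟨r, hr, rfl⟩ | ⟨t, ht, rfl⟩)
    · simpa using MonoidHom.mem_ker.mp (hR ▸ subset_normalClosure hr)
    · simp [hw t ht]
  refine le_antisymm (fun x hx => ?_) hN
  have hker : π.ker ≤ N.comap inr := hR ▸ normalClosure_le_normal
    fun r hr => subset_normalClosure (Or.inl ⟨r, hr, rfl⟩)
  have hrep : ((QuotientGroup.mk' N).comp inr).range.comap (QuotientGroup.mk' N) = ⊤ := by
    rw [eq_top_iff, ← closure_image_inl_union_range_inr (F := F) hT, closure_le]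
    rintro _ (⟨t, ht, rfl⟩ | ⟨f, rfl⟩)
    · refine ⟨w t, (QuotientGroup.eq_iff_div_mem.mpr ?_).symm⟩
      exact subset_normalClosure (Or.inr ⟨t, ht, by simp [div_eq_mul_inv]⟩)
    · exact ⟨f, rfl⟩
  obtain ⟨f, hf⟩ := (hrep ▸ mem_top x : x ∈ _)
  have hxf : x⁻¹ * inr f ∈ N := QuotientGroup.eq.mp hf.symm
  have hf_ker : f ∈ π.ker := by
    simpa [MonoidHom.mem_ker.mp hx] using hN hxf
  simpa using N.mul_mem (hker hf_ker) (N.inv_mem hxf)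

theorem isFinitelyNormallyGenerated_ker_lift [Group.FG H] (φ : H →* G) {π : F →* G}
    (hπ : Function.Surjective π) (hker : π.ker.IsFinitelyNormallyGenerated) :
    (lift φ π).ker.IsFinitelyNormallyGenerated := by
  obtain ⟨T, hT, hT_fin⟩ := Group.fg_iff.mp ‹Group.FG H›
  obtain ⟨R, hR_fin, hR⟩ := hker
  refine ⟨_, (hR_fin.image _).union (hT_fin.image _),
    (ker_lift_eq_normalClosure hR hT (w := fun h => Function.surjInv hπ (φ h)) ?_).symm⟩
  exact fun t _ => Function.surjInv_eq hπ (φ t)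

end Monoid.Coprod

/-- Any homomorphism `φ : H → G` of finitely presented groups extends to a surjection
`Φ : H ∗ F → G` for some finitely generated free group `F`, whose kernel is the normal
closure of finitely many elements. -/
theorem extend_to_surjection_with_finitely_normally_generated_kernel
    (H G : Type) [Group H] [Group G]
    (hH : IsFinitelyPresented H) (hG : IsFinitelyPresented G) (φ : H →* G) :
    ∃ (m : ℕ) (Φ : Monoid.Coprod H (FreeGroup (Fin m)) →* G),
      Φ.comp Monoid.Coprod.inl = φ ∧ Function.Surjective Φ ∧
      ∃ S : Finset (Monoid.Coprod H (FreeGroup (Fin m))),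
        Φ.ker = Subgroup.normalClosure (↑S : Set (Monoid.Coprod H (FreeGroup (Fin m)))) := by
  have := hH.group_isFinitelyPresented.fg
  obtain ⟨m, π, hπ, hker⟩ := hG.group_isFinitelyPresented
  obtain ⟨S, hS_fin, hS⟩ := isFinitelyNormallyGenerated_ker_lift φ hπ hker
  exact ⟨m, lift φ π, lift_comp_inl φ π, lift_surjective_of_surjective_right φ hπ,
    hS_fin.toFinset, by rw [Set.Finite.coe_toFinset, hS]⟩
end

section
/- Let f : ℤ → ℤ be a function such that for every σ ∈ ℤ, f(σ+1) = f(σ) + 1 or f(σ+1) = f(σ) − 1, and suppose there is an integer C such that f(σ) ≥ |σ| − C for all σ ∈ ℤ. Then the set of local minimum points of f, namely {a ∈ ℤ : f(a−1) = f(a) + 1 and f(a+1) = f(a) + 1}, is finite. -/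
private lemma count_downs (h : ℤ → ℤ)
    (hstep : ∀ σ : ℤ, h (σ + 1) = h σ + 1 ∨ h (σ + 1) = h σ - 1) :
    ∀ n : ℕ, h n + 2 * (((Finset.range n).filter
      (fun k : ℕ => h ((k : ℤ) + 1) = h (k : ℤ) - 1)).card : ℤ) = h 0 + n := by
  intro n
  induction n with
  | zero => simp
  | succ n ih =>
    rw [Finset.range_add_one, Finset.filter_insert]
    rcases hstep (n : ℤ) with hu | hd
    · rw [if_neg (by omega)]
      push_cast at ih ⊢
      omega
    · rw [if_pos hd, Finset.card_insert_of_notMem (by simp)]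
      push_cast at ih ⊢
      omega

private lemma downs_finite (h : ℤ → ℤ)
    (hstep : ∀ σ : ℤ, h (σ + 1) = h σ + 1 ∨ h (σ + 1) = h σ - 1)
    (C : ℤ) (hbd : ∀ σ : ℤ, |σ| - C ≤ h σ) :
    {σ : ℤ | 0 ≤ σ ∧ h (σ + 1) = h σ - 1}.Finite := by
  rw [← Set.not_infinite]
  intro hinf
  obtain ⟨T, hTsub, hTcard⟩ := hinf.exists_subset_card_eq ((h 0 + C).toNat + 1)
  set T' : Finset ℕ := T.image Int.toNat with hT'
  have hcard' : T'.card = T.card := by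
    apply Finset.card_image_of_injOn
    intro x hx y hy hxy
    have hx0 := (hTsub hx).1
    have hy0 := (hTsub hy).1
    omega
  have hsub : T' ⊆ (Finset.range (T'.sup id + 1)).filter
      (fun k : ℕ => h ((k : ℤ) + 1) = h (k : ℤ) - 1) := by
    intro k hk
    rw [Finset.mem_filter, Finset.mem_range]
    constructor
    · have := Finset.le_sup (f := id) hk
      simp only [id] at this
      omega
    · obtain ⟨σ, hσT, hσk⟩ := Finset.mem_image.mp hk
      have hσ := hTsub hσT
      have hkσ : (k : ℤ) = σ := by
        have := hσ.1; omega
      rw [hkσ]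
      exact hσ.2
  have hle := Finset.card_le_card hsub
  have hcount := count_downs h hstep (T'.sup id + 1)
  have hbn := hbd ((T'.sup id + 1 : ℕ) : ℤ)
  rw [abs_of_nonneg (by positivity)] at hbn
  omega

/-- If `f : ℤ → ℤ` changes by exactly `±1` at each step and satisfies
`f σ ≥ |σ| − C`, then `f` has only finitely many local minimum points. -/
theorem finitely_many_local_minima (f : ℤ → ℤ)
    (hstep : ∀ σ : ℤ, f (σ + 1) = f σ + 1 ∨ f (σ + 1) = f σ - 1)
    (C : ℤ) (hbd : ∀ σ : ℤ, |σ| - C ≤ f σ) :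
    {a : ℤ | f (a - 1) = f a + 1 ∧ f (a + 1) = f a + 1}.Finite := by
  set g : ℤ → ℤ := fun σ => f (-1 - σ) with hg
  have hgstep : ∀ σ : ℤ, g (σ + 1) = g σ + 1 ∨ g (σ + 1) = g σ - 1 := by
    intro σ
    have hs := hstep (-2 - σ)
    simp only [hg]
    have h1 : (-2 : ℤ) - σ + 1 = -1 - σ := by ring
    rw [h1] at hs
    have h2 : (-1 : ℤ) - (σ + 1) = -2 - σ := by ring
    rw [h2]
    omega
  have hgbd : ∀ σ : ℤ, |σ| - (C + 1) ≤ g σ := by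
    intro σ
    simp only [hg]
    have h3 : |σ| - (C + 1) ≤ |(-1 : ℤ) - σ| - C := by
      rcases abs_cases σ with ⟨h1, h2⟩ | ⟨h1, h2⟩ <;>
        rcases abs_cases ((-1 : ℤ) - σ) with ⟨h3, h4⟩ | ⟨h3, h4⟩ <;> omega
    exact le_trans h3 (hbd _)
  have hDf := downs_finite f hstep C hbd
  have hDg := downs_finite g hgstep (C + 1) hgbd
  have hfin : ((((fun σ : ℤ => σ + 1) '' {σ : ℤ | 0 ≤ σ ∧ f (σ + 1) = f σ - 1}) ∪
      ((fun σ : ℤ => -2 - σ) '' {σ : ℤ | 0 ≤ σ ∧ g (σ + 1) = g σ - 1})) ∪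
      ({0, -1} : Set ℤ)).Finite := by
    refine ((hDf.image _).union (hDg.image _)).union ?_
    exact (Set.finite_singleton _).insert _
  apply hfin.subset
  intro a ha
  obtain ⟨hl, hr⟩ := ha
  simp only [Set.mem_union, Set.mem_image, Set.mem_setOf_eq, Set.mem_insert_iff,
    Set.mem_singleton_iff]
  rcases lt_trichotomy a 0 with hlt | heq | hgt
  · rcases eq_or_lt_of_le (show a ≤ -1 by omega) with h1 | h1
    · right; right; exact h1
    · left; right
      refine ⟨-2 - a, ⟨by omega, ?_⟩, by ring⟩
      simp only [hg]
      have e1 : (-1 : ℤ) - (-2 - a + 1) = a := by ring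
      have e2 : (-1 : ℤ) - (-2 - a) = a + 1 := by ring
      rw [e1, e2]
      omega
  · right; left; exact heq
  · left; left
    refine ⟨a - 1, ⟨by omega, ?_⟩, by ring⟩
    have e1 : a - 1 + 1 = a := by ring
    rw [e1]
    omega
end

section
/- Let f : ℤ → ℤ be a function such that for every σ ∈ ℤ, f(σ+1) = f(σ) + 1 or f(σ+1) = f(σ) − 1, and suppose there is an integer C such that f(σ) ≥ |σ| − C for all σ ∈ ℤ. Then for every x ∈ ℤ there exists a local minimum point a of f (i.e. f(a−1) = f(a) + 1 and f(a+1) = f(a) + 1) such that f(x) ≥ f(a) + |x − a|. -/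
/-- If `f : ℤ → ℤ` changes by exactly `±1` at each step and satisfies
`f σ ≥ |σ| − C`, then every point lies in the cone above some local minimum point:
for every `x` there is a local minimum point `a` with `f x ≥ f a + |x − a|`. -/
theorem cone_over_local_minimum (f : ℤ → ℤ)
    (hstep : ∀ σ : ℤ, f (σ + 1) = f σ + 1 ∨ f (σ + 1) = f σ - 1)
    (C : ℤ) (hbd : ∀ σ : ℤ, |σ| - C ≤ f σ) :
    ∀ x : ℤ, ∃ a : ℤ,
      (f (a - 1) = f a + 1 ∧ f (a + 1) = f a + 1) ∧ f a + |x - a| ≤ f x := by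
  intro x
  set B : ℤ := f x + C with hB
  set T : Finset ℤ := (Finset.Icc (-B) B).filter (fun a => f a + |x - a| ≤ f x) with hT
  have hxT : x ∈ T := by
    have hx := hbd x
    simp only [hT, Finset.mem_filter, Finset.mem_Icc]
    have hxabs : |x| ≤ B := by omega
    have := abs_le.mp hxabs
    simp only [sub_self, abs_zero, add_zero, le_refl, and_true]
    exact this
  obtain ⟨a, haT, hmin⟩ := Finset.exists_min_image T f ⟨x, hxT⟩
  have ha : f a + |x - a| ≤ f x := (Finset.mem_filter.mp haT).2
  have habs : (0:ℤ) ≤ |x - a| := abs_nonneg _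
  -- membership helper
  have hmem : ∀ b : ℤ, f b + |x - b| ≤ f x → b ∈ T := by
    intro b hb
    have hb' := hbd b
    have : |b| ≤ B := by have := abs_nonneg (x - b); omega
    simp only [hT, Finset.mem_filter, Finset.mem_Icc]
    exact ⟨abs_le.mp this, hb⟩
  have hright : f (a + 1) = f a + 1 := by
    rcases hstep a with h | h
    · exact h
    · exfalso
      have htri : |x - (a + 1)| ≤ |x - a| + 1 := by
        have := abs_sub_le x a (a + 1)
        simpa using this
      have hbmem : (a + 1) ∈ T := hmem _ (by omega)
      have := hmin _ hbmem
      omega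
  have hleft : f (a - 1) = f a + 1 := by
    rcases hstep (a - 1) with h | h <;> rw [sub_add_cancel] at h
    · exfalso
      have htri : |x - (a - 1)| ≤ |x - a| + 1 := by
        have := abs_sub_le x a (a - 1)
        simpa using this
      have hbmem : (a - 1) ∈ T := hmem _ (by omega)
      have := hmin _ hbmem
      omega
    · omega
  exact ⟨a, ⟨hleft, hright⟩, ha⟩
end
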